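/- arXiv:1810.08287 — 2 statements merged into one kernel-verified Lean document; each statement's English description precedes it below -/
import Mathlib

section
/- Let m ≥ 1 and let λ : Fin m → ℝ satisfy λ_i > 0 for all i. For all delays τ₁, τ₂ with 0 ≤ τ₁ < τ₂ and τ₂·λ_i < π/2 for every i, it holds that Σ_{i} cos(τ₁λ_i)/(2λ_i(1 − sin(τ₁λ_i))) < Σ_{i} cos(τ₂λ_i)/(2λ_i(1 − sin(τ₂λ_i))). In other words, the performance measure ρ_ss(L;τ) = Σ_i f_τ(λ_i) is strictly increasing in the time-delay τ on [0, π/(2·max_i λ_i)). -/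
/-! Since `cos θ / (1 - sin θ) = (1 + sin θ) / cos θ`, and on `[0, π/2)` the numerator
`1 + sin θ` increases while the denominator `cos θ` decreases and stays positive, this
quotient is strictly increasing there. Each summand is that quotient at `θ = τ λᵢ`,
divided by `2 λᵢ > 0`. -/

open Real Set Finset

/-- Where `cos θ = 0`, both sides are the junk value `0`. -/
theorem cos_div_one_sub_sin (θ : ℝ) : cos θ / (1 - sin θ) = (1 + sin θ) / cos θ := by
  rcases eq_or_ne (cos θ) 0 with hcos | hcos
  · simp [hcos]
  have hsin : 1 - sin θ ≠ 0 := by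
    intro h
    exact hcos (sq_eq_zero_iff.mp (by nlinarith [sin_sq_add_cos_sq θ]))
  rw [div_eq_div_iff hsin hcos]
  nlinarith [sin_sq_add_cos_sq θ]

theorem strictMonoOn_cos_div_one_sub_sin :
    StrictMonoOn (fun θ ↦ cos θ / (1 - sin θ)) (Ico 0 (π / 2)) := by
  rintro a ⟨ha, -⟩ b ⟨-, hb⟩ hab
  simp only [cos_div_one_sub_sin]
  have hsin : sin a < sin b :=
    sin_lt_sin_of_lt_of_le_pi_div_two (by linarith [pi_pos]) hb.le hab
  have hcos : cos b ≤ cos a := cos_le_cos_of_nonneg_of_le_pi ha (by linarith [pi_pos]) hab.le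
  have hcos_pos : 0 < cos b := cos_pos_of_mem_Ioo ⟨by linarith, hb⟩
  exact div_lt_div₀ (by linarith) hcos (by linarith [neg_one_le_sin b]) hcos_pos

/-- The performance measure `ρ_ss(L;τ) = Σᵢ f_τ(λᵢ)`, with
`f_τ(λ) = cos(τλ)/(2λ(1 − sin(τλ)))`, is strictly increasing in the delay:
if `0 ≤ τ₁ < τ₂` and `τ₂·λᵢ < π/2` for all `i`, the sum at `τ₁` is strictly
smaller than the sum at `τ₂`. -/
theorem performance_strictly_increasing_in_delay (m : ℕ) (hm : 1 ≤ m)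
    (lam : Fin m → ℝ) (hlam : ∀ i, 0 < lam i)
    (τ₁ τ₂ : ℝ) (hτ₁ : 0 ≤ τ₁) (hτ : τ₁ < τ₂)
    (hστ : ∀ i, τ₂ * lam i < Real.pi / 2) :
    ∑ i, Real.cos (τ₁ * lam i) / (2 * lam i * (1 - Real.sin (τ₁ * lam i))) <
      ∑ i, Real.cos (τ₂ * lam i) / (2 * lam i * (1 - Real.sin (τ₂ * lam i))) := by
  have : NeZero m := ⟨by omega⟩
  refine sum_lt_sum_of_nonempty univ_nonempty fun i _ ↦ ?_
  have h_lt : τ₁ * lam i < τ₂ * lam i := mul_lt_mul_of_pos_right hτ (hlam i)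
  have h₁_nonneg : 0 ≤ τ₁ * lam i := mul_nonneg hτ₁ (hlam i).le
  have key := strictMonoOn_cos_div_one_sub_sin ⟨h₁_nonneg, h_lt.trans (hστ i)⟩
    ⟨h₁_nonneg.trans h_lt.le, hστ i⟩ h_lt
  have h_two_lam : 0 < 2 * lam i := by linarith [hlam i]
  simpa only [div_div, mul_comm _ (2 * lam i)] using div_lt_div_of_pos_right key h_two_lam
end

section
/- Let τ > 0, m ≥ 1, and let λ : Fin m → ℝ satisfy 0 < λ_i < π/(2τ) for every i. Then Σ_{i} cos(τλ_i)/(2λ_i(1 − sin(τλ_i))) ≥ m·τ/(2(1 − sin(z*))), where z* is the unique positive solution of cos(z) = z; equality holds if and only if λ_i = z*/τ for every i. -/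
/-! Put `x = τλ`. Then `f_τ(λ) = τ / (2 g(x))` with `g(x) = x cos x / (1 + sin x)`, and since
`(cos x / (1 + sin x))' = -1 / (1 + sin x)`, one has `g'(x) = (cos x - x) / (1 + sin x)`. So on
`[0, π/2]` the function `g` increases strictly up to the fixed point `z` of `cos` and decreases
strictly after it, with maximum `g(z) = z² / (1 + sin z) = cos² z / (1 + sin z) = 1 - sin z`. -/

open Real Set

noncomputable section

/-- The paper's `f_τ(λ)`. -/
def delayPerf (τ l : ℝ) : ℝ := cos (τ * l) / (2 * l * (1 - sin (τ * l)))

def delayGain (x : ℝ) : ℝ := x * cos x / (1 + sin x)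

end

variable {τ l x z : ℝ}

lemma mem_Ioo_of_cos_eq_self (hz : cos z = z) : z ∈ Ioo 0 (π / 2) := by
  have hz1 : z < π / 2 := by linarith [hz ▸ cos_le_one z, pi_gt_three]
  refine ⟨?_, hz1⟩
  by_contra! hz0
  have : -(π / 2) < z := by linarith [hz ▸ neg_one_le_cos z, pi_gt_three]
  linarith [cos_pos_of_mem_Ioo ⟨this, hz1⟩]

lemma mul_mem_Ioo_pi_div_two (hτ : 0 < τ) (hl : l ∈ Ioo 0 (π / (2 * τ))) :
    τ * l ∈ Ioo 0 (π / 2) := by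
  refine ⟨mul_pos hτ hl.1, ?_⟩
  calc τ * l < τ * (π / (2 * τ)) := mul_lt_mul_of_pos_left hl.2 hτ
    _ = π / 2 := by field_simp

lemma one_add_sin_pos_of_mem_Icc (hx : x ∈ Icc 0 (π / 2)) : 0 < 1 + sin x := by
  linarith [sin_nonneg_of_nonneg_of_le_pi hx.1 (by linarith [hx.2, pi_pos])]

lemma hasDerivAt_delayGain (hx : 1 + sin x ≠ 0) :
    HasDerivAt delayGain ((cos x - x) / (1 + sin x)) x := by
  have h : HasDerivAt (fun y => y * cos y / (1 + sin y))
      (((1 * cos x + x * -sin x) * (1 + sin x) - x * cos x * (0 + cos x)) / (1 + sin x) ^ 2) x :=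
    ((hasDerivAt_id x).mul (hasDerivAt_cos x)).div
      ((hasDerivAt_const x 1).add (hasDerivAt_sin x)) hx
  refine h.congr_deriv ?_
  field_simp
  linear_combination (-x) * sin_sq_add_cos_sq x

lemma continuousOn_delayGain : ContinuousOn delayGain (Icc 0 (π / 2)) := fun _ hx =>
  (hasDerivAt_delayGain (one_add_sin_pos_of_mem_Icc hx).ne').continuousAt.continuousWithinAt

lemma delayGain_pos (hx : x ∈ Ioo 0 (π / 2)) : 0 < delayGain x :=
  div_pos (mul_pos hx.1 (cos_pos_of_mem_Ioo ⟨by linarith [hx.1, pi_pos], hx.2⟩))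
    (one_add_sin_pos_of_mem_Icc (Ioo_subset_Icc_self hx))

lemma delayGain_strictMonoOn (hz : cos z = z) : StrictMonoOn delayGain (Icc 0 z) := by
  have hzπ := mem_Ioo_of_cos_eq_self hz
  refine strictMonoOn_of_deriv_pos (convex_Icc 0 z)
    (continuousOn_delayGain.mono (Icc_subset_Icc_right hzπ.2.le)) fun x hx => ?_
  rw [interior_Icc] at hx
  have hx' : x ∈ Icc 0 (π / 2) := ⟨hx.1.le, hx.2.le.trans hzπ.2.le⟩
  rw [(hasDerivAt_delayGain (one_add_sin_pos_of_mem_Icc hx').ne').deriv]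
  have : z ≤ cos x :=
    hz ▸ cos_le_cos_of_nonneg_of_le_pi hx.1.le (by linarith [hzπ.2, pi_pos]) hx.2.le
  exact div_pos (by linarith [hx.2]) (one_add_sin_pos_of_mem_Icc hx')

lemma delayGain_strictAntiOn (hz : cos z = z) : StrictAntiOn delayGain (Icc z (π / 2)) := by
  have hzπ := mem_Ioo_of_cos_eq_self hz
  refine strictAntiOn_of_deriv_neg (convex_Icc z (π / 2))
    (continuousOn_delayGain.mono (Icc_subset_Icc_left hzπ.1.le)) fun x hx => ?_
  rw [interior_Icc] at hx
  have hx' : x ∈ Icc 0 (π / 2) := ⟨hzπ.1.le.trans hx.1.le, hx.2.le⟩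
  rw [(hasDerivAt_delayGain (one_add_sin_pos_of_mem_Icc hx').ne').deriv]
  have : cos x ≤ z :=
    hz ▸ cos_le_cos_of_nonneg_of_le_pi hzπ.1.le (by linarith [hx.2, pi_pos]) hx.1.le
  exact div_neg_of_neg_of_pos (by linarith [hx.1]) (one_add_sin_pos_of_mem_Icc hx')

lemma delayGain_lt_of_ne (hz : cos z = z) (hx : x ∈ Icc 0 (π / 2)) (hxz : x ≠ z) :
    delayGain x < delayGain z := by
  have hzπ := mem_Ioo_of_cos_eq_self hz
  rcases hxz.lt_or_gt with hlt | hgt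
  · exact delayGain_strictMonoOn hz ⟨hx.1, hlt.le⟩ ⟨hzπ.1.le, le_rfl⟩ hlt
  · exact delayGain_strictAntiOn hz ⟨le_rfl, hzπ.2.le⟩ ⟨hgt.le, hx.2⟩ hgt

lemma delayGain_eq_iff (hz : cos z = z) (hx : x ∈ Icc 0 (π / 2)) :
    delayGain x = delayGain z ↔ x = z :=
  ⟨fun h => by_contra fun hxz => (delayGain_lt_of_ne hz hx hxz).ne h, fun h => h ▸ rfl⟩

lemma delayGain_of_cos_eq_self (hz : cos z = z) : delayGain z = 1 - sin z := by
  have hpos := one_add_sin_pos_of_mem_Icc (Ioo_subset_Icc_self (mem_Ioo_of_cos_eq_self hz))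
  rw [delayGain, div_eq_iff hpos.ne']
  nth_rewrite 1 [← hz]
  linear_combination sin_sq_add_cos_sq z

lemma delayPerf_eq_div (hτ : 0 < τ) (hl : l ∈ Ioo 0 (π / (2 * τ))) :
    delayPerf τ l = τ / (2 * delayGain (τ * l)) := by
  have ht := mul_mem_Ioo_pi_div_two hτ hl
  have hsin : 0 < 1 - sin (τ * l) := by
    have hcos := cos_pos_of_mem_Ioo ⟨by linarith [ht.1, pi_pos], ht.2⟩
    nlinarith [sin_sq_add_cos_sq (τ * l)]
  have hsin' := one_add_sin_pos_of_mem_Icc (Ioo_subset_Icc_self ht)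
  rw [delayPerf, div_eq_div_iff (mul_pos (mul_pos two_pos hl.1) hsin).ne'
    (mul_pos two_pos (delayGain_pos ht)).ne', delayGain]
  field_simp
  linear_combination l * sin_sq_add_cos_sq (τ * l)

lemma delayPerf_ge (hτ : 0 < τ) (hz : cos z = z) (hl : l ∈ Ioo 0 (π / (2 * τ))) :
    τ / (2 * (1 - sin z)) ≤ delayPerf τ l := by
  have ht := mul_mem_Ioo_pi_div_two hτ hl
  rw [delayPerf_eq_div hτ hl, ← delayGain_of_cos_eq_self hz]
  have := delayGain_pos ht
  gcongr
  rcases eq_or_ne (τ * l) z with h | h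
  · rw [h]
  · exact (delayGain_lt_of_ne hz (Ioo_subset_Icc_self ht) h).le

lemma delayPerf_eq_iff (hτ : 0 < τ) (hz : cos z = z) (hl : l ∈ Ioo 0 (π / (2 * τ))) :
    delayPerf τ l = τ / (2 * (1 - sin z)) ↔ l = z / τ := by
  have ht := mul_mem_Ioo_pi_div_two hτ hl
  rw [delayPerf_eq_div hτ hl, ← delayGain_of_cos_eq_self hz,
    div_eq_div_iff (mul_pos two_pos (delayGain_pos ht)).ne'
      (mul_pos two_pos (delayGain_pos (mem_Ioo_of_cos_eq_self hz))).ne',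
    mul_right_inj' hτ.ne', mul_right_inj' two_ne_zero, eq_comm,
    delayGain_eq_iff hz (Ioo_subset_Icc_self ht), eq_div_iff hτ.ne', mul_comm]

theorem performance_fundamental_limit_general (τ : ℝ) (hτ : 0 < τ) (m : ℕ)
    (lam : Fin m → ℝ) (hlam : ∀ i, lam i ∈ Set.Ioo 0 (Real.pi / (2 * τ)))
    (z : ℝ) (hzfix : Real.cos z = z) :
    (∑ i, Real.cos (τ * lam i) / (2 * lam i * (1 - Real.sin (τ * lam i))) ≥
        (m : ℝ) * τ / (2 * (1 - Real.sin z))) ∧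
      (∑ i, Real.cos (τ * lam i) / (2 * lam i * (1 - Real.sin (τ * lam i))) =
          (m : ℝ) * τ / (2 * (1 - Real.sin z)) ↔ ∀ i, lam i = z / τ) := by
  have hconst : ∑ _i : Fin m, τ / (2 * (1 - sin z)) = m * τ / (2 * (1 - sin z)) := by
    simp only [Finset.sum_const, Finset.card_univ, Fintype.card_fin, nsmul_eq_mul, mul_div_assoc]
  have hle (i : Fin m) (_ : i ∈ Finset.univ) : τ / (2 * (1 - sin z)) ≤ delayPerf τ (lam i) :=
    delayPerf_ge hτ hzfix (hlam i)
  rw [← hconst, eq_comm]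
  refine ⟨Finset.sum_le_sum hle, (Finset.sum_eq_sum_iff_of_le hle).trans ?_⟩
  simp only [Finset.mem_univ, true_implies, eq_comm (a := τ / _),
    delayPerf_eq_iff hτ hzfix (hlam _)]

/-- Fundamental limit on performance: for `τ > 0` and `λᵢ ∈ (0, π/(2τ))`,
`Σᵢ cos(τλᵢ)/(2λᵢ(1 − sin(τλᵢ))) ≥ m·τ/(2(1 − sin z*))`, where `z*` is the
unique positive solution of `cos z = z`; equality holds iff `λᵢ = z*/τ` for
every `i`. -/
theorem performance_fundamental_limit (τ : ℝ) (hτ : 0 < τ) (m : ℕ) (hm : 1 ≤ m)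
    (lam : Fin m → ℝ) (hlam : ∀ i, lam i ∈ Set.Ioo 0 (Real.pi / (2 * τ)))
    (z : ℝ) (hz : 0 < z) (hzfix : Real.cos z = z) :
    (∑ i, Real.cos (τ * lam i) / (2 * lam i * (1 - Real.sin (τ * lam i))) ≥
        (m : ℝ) * τ / (2 * (1 - Real.sin z))) ∧
      (∑ i, Real.cos (τ * lam i) / (2 * lam i * (1 - Real.sin (τ * lam i))) =
          (m : ℝ) * τ / (2 * (1 - Real.sin z)) ↔ ∀ i, lam i = z / τ) :=
  performance_fundamental_limit_general τ hτ m lam hlam z hzfix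
end
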